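/- Suppose in addition that u_T satisfies the Oleinik condition (O) at T. Then for every x ∈ ℝ the set M(x) is a nonempty compact interval of ℝ. -/

import Mathlib

/-!
With `g ξ = U_T ξ - T f*((ξ - x)/T)`, `M(x)` is the set where `g` attains its supremum.
Since `U_T` is `C`-Lipschitz while `f*(y) ≥ (C + 1)|y| - const`, `g → -∞` at `±∞`,
so the supremum is attained and `M(x)` is compact. As `(f*)' = (f')⁻¹`, `g` is the primitive
of `u_T - (f')⁻¹((· - x)/T)`, whose sign is that of `f'(u_T ξ) - (ξ - x)/T`; condition (O)
makes this nonincreasing, so `g` increases and then decreases. Hence `g` is quasiconcave and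
its top superlevel set `M(x)` is an interval.
-/

open Filter MeasureTheory

/-- Condition (f): `f` is `C²`, strongly convex (`f'' > 0` everywhere), and
`f' → ∓∞` at `∓∞`. -/
def CondF (f : ℝ → ℝ) : Prop :=
  ContDiff ℝ 2 f ∧ (∀ x, 0 < deriv (deriv f) x) ∧
    Tendsto (deriv f) atBot atBot ∧ Tendsto (deriv f) atTop atTop

/-- The Legendre transform `f*(y) = sup_x (y·x − f(x))`. -/
noncomputable def legendre (f : ℝ → ℝ) (y : ℝ) : ℝ :=
  sSup (Set.range fun x => y * x - f x)

/-- `U_T(x) = ∫_{x̌}^x u_T`. -/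
noncomputable def UT (uT : ℝ → ℝ) (xc x : ℝ) : ℝ := ∫ ξ in xc..x, uT ξ

/-- `U_o^♭(x) = sup_ξ [U_T(ξ) − T f*((ξ−x)/T)]`. -/
noncomputable def Uflat (f : ℝ → ℝ) (T : ℝ) (uT : ℝ → ℝ) (xc x : ℝ) : ℝ :=
  sSup (Set.range fun ξ => UT uT xc ξ - T * legendre f ((ξ - x) / T))

/-- `M(x)`: the set of maximizers in the definition of `U_o^♭(x)`. -/
def MSet (f : ℝ → ℝ) (T : ℝ) (uT : ℝ → ℝ) (xc x : ℝ) : Set ℝ :=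
  {ξ | UT uT xc ξ = Uflat f T uT xc x + T * legendre f ((ξ - x) / T)}

/-- Oleinik condition (O) at `T`. -/
def Oleinik (f : ℝ → ℝ) (T : ℝ) (uT : ℝ → ℝ) : Prop :=
  ∀ x Δ : ℝ, 0 < Δ → deriv f (uT (x + Δ)) - deriv f (uT x) ≤ Δ / T

/-- The Hopf–Lax operator at time `T`: `(S_T U)(x) = inf_ξ [U(ξ) + T f*((x−ξ)/T)]`. -/
noncomputable def HopfLax (f : ℝ → ℝ) (T : ℝ) (U : ℝ → ℝ) (x : ℝ) : ℝ :=
  sInf (Set.range fun ξ => U ξ + T * legendre f ((x - ξ) / T))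

/-- Left continuity of a real function. -/
def LeftCts (u : ℝ → ℝ) : Prop :=
  ∀ x, Tendsto u (nhdsWithin x (Set.Iio x)) (nhds (u x))

/-- `II_T(U_T; J)`: Lipschitz functions with a.e. derivative in `J` evolving into `U_T`
under the Hopf–Lax semigroup. -/
def IIT (f : ℝ → ℝ) (T : ℝ) (uT : ℝ → ℝ) (xc : ℝ) (J : Set ℝ) : Set (ℝ → ℝ) :=
  {U | (∃ K, LipschitzWith K U) ∧ (∀ᵐ x ∂volume, deriv U x ∈ J) ∧
    ∀ x, HopfLax f T U x = UT uT xc x}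

/-- `U_o^♯(x) = sup { U(x) : U ∈ II_T(U_T; J) }`. -/
noncomputable def Usharp (f : ℝ → ℝ) (T : ℝ) (uT : ℝ → ℝ) (xc : ℝ) (J : Set ℝ) (x : ℝ) : ℝ :=
  sSup ((fun U : ℝ → ℝ => U x) '' IIT f T uT xc J)

open Set

theorem isGreatest_range_mul_sub_of_deriv_eq {f : ℝ → ℝ} (hd : Differentiable ℝ f)
    (hm : Monotone (deriv f)) {x₀ y : ℝ} (h₀ : deriv f x₀ = y) :
    IsGreatest (range fun z => y * z - f z) (y * x₀ - f x₀) := by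
  set φ : ℝ → ℝ := fun z => f z - y * z
  have hφ : ∀ z, HasDerivAt φ (deriv f z - y) z := fun z =>
    (hd z).hasDerivAt.sub (by simpa using (hasDerivAt_id z).const_mul y)
  have hconv : ConvexOn ℝ univ φ := by
    refine Monotone.convexOn_univ_of_deriv (fun z => (hφ z).differentiableAt) fun a b hab => ?_
    simp only [(hφ _).deriv]
    linarith [hm hab]
  have hmin : IsMinOn φ univ x₀ := by
    refine hconv.isMinOn_of_rightDeriv_eq_zero (by simp) ?_
    rw [(hφ x₀).hasDerivWithinAt.derivWithin (uniqueDiffWithinAt_Ioi x₀), h₀, sub_self]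
  refine ⟨⟨x₀, rfl⟩, ?_⟩
  rintro _ ⟨z, rfl⟩
  have : f x₀ - y * x₀ ≤ f z - y * z := hmin (mem_univ z)
  linarith

theorem legendre_eq_of_deriv_eq {f : ℝ → ℝ} (hd : Differentiable ℝ f)
    (hm : Monotone (deriv f)) {x₀ y : ℝ} (h₀ : deriv f x₀ = y) :
    legendre f y = y * x₀ - f x₀ :=
  (isGreatest_range_mul_sub_of_deriv_eq hd hm h₀).csSup_eq

namespace CondF

variable {f : ℝ → ℝ}

theorem differentiable (hf : CondF f) : Differentiable ℝ f :=
  hf.1.differentiable (by norm_num)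

theorem differentiable_deriv (hf : CondF f) : Differentiable ℝ (deriv f) :=
  hf.1.differentiable_deriv_two

theorem strictMono_deriv (hf : CondF f) : StrictMono (deriv f) :=
  strictMono_of_deriv_pos hf.2.1

theorem surjective_deriv (hf : CondF f) : Function.Surjective (deriv f) :=
  hf.differentiable_deriv.continuous.surjective hf.2.2.2 hf.2.2.1

noncomputable def derivOrderIso (hf : CondF f) : ℝ ≃o ℝ :=
  StrictMono.orderIsoOfSurjective (deriv f) hf.strictMono_deriv hf.surjective_deriv

theorem deriv_derivOrderIso_symm (hf : CondF f) (y : ℝ) :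
    deriv f (hf.derivOrderIso.symm y) = y :=
  hf.derivOrderIso.apply_symm_apply y

theorem legendre_eq (hf : CondF f) (y : ℝ) :
    legendre f y = y * hf.derivOrderIso.symm y - f (hf.derivOrderIso.symm y) :=
  legendre_eq_of_deriv_eq hf.differentiable hf.strictMono_deriv.monotone
    (hf.deriv_derivOrderIso_symm y)

theorem mul_sub_le_legendre (hf : CondF f) (y m : ℝ) : y * m - f m ≤ legendre f y :=
  le_csSup (isGreatest_range_mul_sub_of_deriv_eq hf.differentiable hf.strictMono_deriv.monotone
    (hf.deriv_derivOrderIso_symm y)).bddAbove ⟨m, rfl⟩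

theorem mul_abs_sub_le_legendre (hf : CondF f) (c y : ℝ) :
    c * |y| - max (f c) (f (-c)) ≤ legendre f y := by
  rcases le_total 0 y with hy | hy
  · have := hf.mul_sub_le_legendre y c
    rw [abs_of_nonneg hy]
    linarith [le_max_left (f c) (f (-c))]
  · have := hf.mul_sub_le_legendre y (-c)
    rw [abs_of_nonpos hy]
    linarith [le_max_right (f c) (f (-c))]

theorem hasDerivAt_legendre (hf : CondF f) (y : ℝ) :
    HasDerivAt (legendre f) (hf.derivOrderIso.symm y) y := by
  set I := hf.derivOrderIso.symm
  have hI : HasDerivAt I (deriv (deriv f) (I y))⁻¹ y :=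
    (hf.differentiable_deriv (I y)).hasDerivAt.of_local_left_inverse I.continuous.continuousAt
      (hf.2.1 (I y)).ne' (Eventually.of_forall hf.deriv_derivOrderIso_symm)
  have h := ((hasDerivAt_id y).mul hI).sub ((hf.differentiable (I y)).hasDerivAt.comp y hI)
  rw [show legendre f = fun z => z * I z - f (I z) from funext hf.legendre_eq]
  refine h.congr_deriv ?_
  rw [hf.deriv_derivOrderIso_symm y]
  simp only [id]
  ring

theorem continuous_legendre (hf : CondF f) : Continuous (legendre f) :=
  continuous_iff_continuousAt.2 fun y => (hf.hasDerivAt_legendre y).continuousAt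

end CondF

theorem intervalIntegrable_of_abs_le {μ : Measure ℝ} [IsLocallyFiniteMeasure μ] {u : ℝ → ℝ}
    {C : ℝ} (hu : Measurable u) (hC : ∀ x, |u x| ≤ C) (a b : ℝ) : IntervalIntegrable u μ a b :=
  intervalIntegrable_const.mono_fun' hu.aestronglyMeasurable
    (ae_of_all _ fun x => (Real.norm_eq_abs _).trans_le (hC x))

theorem UT_sub_UT {uT : ℝ → ℝ} (hint : ∀ a b, IntervalIntegrable uT volume a b) (xc a b : ℝ) :
    UT uT xc b - UT uT xc a = ∫ s in a..b, uT s :=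
  intervalIntegral.integral_interval_sub_left (hint xc b) (hint xc a)

theorem abs_UT_sub_UT_le {uT : ℝ → ℝ} {C : ℝ} (huT : Measurable uT) (hC : ∀ x, |uT x| ≤ C)
    (xc a b : ℝ) : |UT uT xc b - UT uT xc a| ≤ C * |b - a| := by
  rw [UT_sub_UT (intervalIntegrable_of_abs_le huT hC)]
  simpa using intervalIntegral.norm_integral_le_of_norm_le_const
    fun s _ => (Real.norm_eq_abs _).trans_le (hC s)

theorem continuous_UT {uT : ℝ → ℝ} {C : ℝ} (huT : Measurable uT) (hC : ∀ x, |uT x| ≤ C)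
    (xc : ℝ) : Continuous (UT uT xc) :=
  intervalIntegral.continuous_primitive (intervalIntegrable_of_abs_le huT hC) xc

theorem quasiconcaveOn_of_sub_eq_integral {g w : ℝ → ℝ}
    (hg : ∀ a b, g b - g a = ∫ s in a..b, w s)
    (hw : ∀ ξ, (∀ s ≤ ξ, 0 ≤ w s) ∨ ∀ s ≥ ξ, w s ≤ 0) : QuasiconcaveOn ℝ univ g := by
  refine fun r => convex_iff_ordConnected.2 ⟨fun a ha b hb ξ hξ => ⟨mem_univ ξ, ?_⟩⟩
  rcases hw ξ with h | h
  · have := intervalIntegral.integral_nonneg (μ := volume) hξ.1 fun s hs => h s hs.2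
    linarith [ha.2, hg a ξ]
  · have := intervalIntegral.integral_nonneg (μ := volume) hξ.2 fun s hs => neg_nonneg.2 (h s hs.1)
    rw [intervalIntegral.integral_neg] at this
    linarith [hb.2, hg ξ b]

theorem forall_le_or_forall_ge_of_antitone_sub_comp {h a b : ℝ → ℝ} (hh : StrictMono h)
    (hanti : Antitone fun s => h (a s) - h (b s)) (ξ : ℝ) :
    (∀ s ≤ ξ, b s ≤ a s) ∨ ∀ s ≥ ξ, a s ≤ b s := by
  rcases le_total (h (b ξ)) (h (a ξ)) with hξ | hξ
  · exact Or.inl fun s hs => hh.le_iff_le.1 (by linarith [hanti hs])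
  · exact Or.inr fun s hs => hh.le_iff_le.1 (by linarith [hanti hs])

theorem exists_setOf_eq_sSup_range_eq_Icc {g : ℝ → ℝ} (hc : Continuous g)
    (hlim : Tendsto g (cocompact ℝ) atBot) (hq : QuasiconcaveOn ℝ univ g) :
    ∃ a b, a ≤ b ∧ {ξ | g ξ = sSup (range g)} = Icc a b := by
  obtain ⟨ξ₀, hξ₀⟩ := hc.exists_forall_ge hlim
  have hsup : sSup (range g) = g ξ₀ := IsGreatest.csSup_eq ⟨⟨ξ₀, rfl⟩, forall_mem_range.2 hξ₀⟩
  set S := {ξ | g ξ = sSup (range g)}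
  have hS : S = {ξ | g ξ₀ ≤ g ξ} := by
    ext ξ
    simp only [S, hsup, mem_ofPred_eq]
    exact ⟨ge_of_eq, fun h => le_antisymm (hξ₀ ξ) h⟩
  have hne : S.Nonempty := ⟨ξ₀, hsup.symm⟩
  have hcompact : IsCompact S := by
    obtain ⟨K, hK, hKc⟩ := mem_cocompact.1 (hlim.eventually (eventually_lt_atBot (g ξ₀)))
    refine hK.of_isClosed_subset (hS ▸ isClosed_le continuous_const hc) fun ξ hξ => ?_
    by_contra h
    rw [hS] at hξ
    exact (hKc h).not_ge (show g ξ₀ ≤ g ξ from hξ)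
  have hconn : IsConnected S := ⟨hne, by simpa [hS] using (hq (g ξ₀)).isPreconnected⟩
  exact ⟨_, _, csInf_le_csSup hne hcompact.bddBelow hcompact.bddAbove,
    eq_Icc_of_connected_compact hconn hcompact⟩

theorem Oleinik.antitone {f : ℝ → ℝ} {T : ℝ} {uT : ℝ → ℝ} (hO : Oleinik f T uT) (x : ℝ) :
    Antitone fun s => deriv f (uT s) - (s - x) / T := by
  intro s t hst
  rcases hst.eq_or_lt with rfl | hlt
  · rfl
  · have h := hO s (t - s) (sub_pos.2 hlt)
    rw [add_sub_cancel] at h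
    have : (t - x) / T - (s - x) / T = (t - s) / T := by ring
    linarith

noncomputable def UflatObjective (f : ℝ → ℝ) (T : ℝ) (uT : ℝ → ℝ) (xc x ξ : ℝ) : ℝ :=
  UT uT xc ξ - T * legendre f ((ξ - x) / T)

section UflatObjective

variable {f : ℝ → ℝ} {T : ℝ} {uT : ℝ → ℝ} {C : ℝ}

theorem MSet_eq_setOf_eq_sSup (xc x : ℝ) :
    MSet f T uT xc x =
      {ξ | UflatObjective f T uT xc x ξ = sSup (range (UflatObjective f T uT xc x))} := by
  ext ξ
  exact sub_eq_iff_eq_add.symm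

theorem continuous_UflatObjective (hf : CondF f) (huT : Measurable uT) (hC : ∀ x, |uT x| ≤ C)
    (xc x : ℝ) : Continuous (UflatObjective f T uT xc x) :=
  (continuous_UT huT hC xc).sub
    (continuous_const.mul (hf.continuous_legendre.comp ((continuous_sub_right x).div_const T)))

theorem tendsto_UflatObjective_cocompact (hf : CondF f) (hT : 0 < T) (huT : Measurable uT)
    (hC : ∀ x, |uT x| ≤ C) (xc x : ℝ) :
    Tendsto (UflatObjective f T uT xc x) (cocompact ℝ) atBot := by
  set K := UT uT xc x + T * max (f (C + 1)) (f (-(C + 1)))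
  have hbound : ∀ ξ, UflatObjective f T uT xc x ξ ≤ K - dist ξ x := by
    intro ξ
    have hU := (abs_le.1 (abs_UT_sub_UT_le huT hC xc x ξ)).2
    have hL := mul_le_mul_of_nonneg_left
      (hf.mul_abs_sub_le_legendre (C + 1) ((ξ - x) / T)) hT.le
    have hT' : T * ((C + 1) * |(ξ - x) / T|) = (C + 1) * |ξ - x| := by
      rw [abs_div, abs_of_pos hT]
      field_simp
    rw [mul_sub, hT'] at hL
    rw [Real.dist_eq]
    simp only [UflatObjective, K]
    linarith
  refine tendsto_atBot_mono hbound ?_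
  simpa [sub_eq_add_neg] using tendsto_atBot_add_const_left _ K
    (tendsto_neg_atTop_atBot.comp (tendsto_dist_right_cocompact_atTop x))

theorem quasiconcaveOn_UflatObjective (hf : CondF f) (hT : 0 < T) (huT : Measurable uT)
    (hC : ∀ x, |uT x| ≤ C) (hO : Oleinik f T uT) (xc x : ℝ) :
    QuasiconcaveOn ℝ univ (UflatObjective f T uT xc x) := by
  set I : ℝ → ℝ := fun s => hf.derivOrderIso.symm ((s - x) / T)
  have hIc : Continuous I :=
    hf.derivOrderIso.symm.continuous.comp ((continuous_sub_right x).div_const T)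
  have hI : ∀ s, HasDerivAt (fun s => T * legendre f ((s - x) / T)) (I s) s := by
    intro s
    have h := ((hf.hasDerivAt_legendre _).comp s
      (((hasDerivAt_id s).sub_const x).div_const T)).const_mul T
    refine h.congr_deriv ?_
    simp only [id, I]
    field_simp
  have hint := intervalIntegrable_of_abs_le (μ := volume) huT hC
  refine quasiconcaveOn_of_sub_eq_integral (w := fun s => uT s - I s) (fun a b => ?_) fun ξ => ?_
  · rw [intervalIntegral.integral_sub (hint a b) (hIc.intervalIntegrable a b), ← UT_sub_UT hint,
      intervalIntegral.integral_eq_sub_of_hasDerivAt (fun s _ => hI s) (hIc.intervalIntegrable a b)]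
    simp only [UflatObjective]
    ring
  · have hanti : Antitone fun s => deriv f (uT s) - deriv f (I s) := by
      simpa only [I, hf.deriv_derivOrderIso_symm] using hO.antitone x
    exact (forall_le_or_forall_ge_of_antitone_sub_comp hf.strictMono_deriv hanti ξ).imp
      (fun h s hs => sub_nonneg.2 (h s hs)) fun h s hs => sub_nonpos.2 (h s hs)

end UflatObjective

theorem stmt_8 (f : ℝ → ℝ) (hf : CondF f) (T : ℝ) (hT : 0 < T)
    (uT : ℝ → ℝ) (huT : Measurable uT) (C : ℝ) (hC : ∀ x, |uT x| ≤ C) (xc : ℝ)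
    (hO : Oleinik f T uT) :
    ∀ x : ℝ, ∃ a b : ℝ, a ≤ b ∧ MSet f T uT xc x = Set.Icc a b := by
  intro x
  rw [MSet_eq_setOf_eq_sSup]
  exact exists_setOf_eq_sSup_range_eq_Icc (continuous_UflatObjective hf huT hC xc x)
    (tendsto_UflatObjective_cocompact hf hT huT hC xc x)
    (quasiconcaveOn_UflatObjective hf hT huT hC hO xc x)
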